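/- Let Γ be a Blackwell game with finitely many players, finite action sets, and bounded, Borel-measurable, tail-measurable payoff functions, and let ε > 0. If there exists a play p* ∈ A^ℕ such that f_i(p*) > v̄_i − ε for every player i ∈ I, then Γ admits an ε-equilibrium. -/

import Mathlib

open MeasureTheory

namespace Blackwell

/-- The set of plays: infinite streams of action profiles. -/
abbrev Play {ι : Type*} (Ac : ι → Type*) : Type _ := ℕ → ∀ j, Ac j

/-- A behavior strategy of player `i`: a mixed action after every finite history.
A history of length `t` is encoded by the first `t` coordinates of a play, and the
strategy is required to depend only on these coordinates. -/
structure Strategy {ι : Type*} (Ac : ι → Type*) (i : ι) where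
  act : ℕ → Play Ac → PMF (Ac i)
  depends_on_past : ∀ (t : ℕ) (p q : Play Ac), (∀ s, s < t → p s = q s) → act t p = act t q

/-- A strategy profile: a behavior strategy for every player. -/
abbrev Profile {ι : Type*} (Ac : ι → Type*) : Type _ := ∀ i, Strategy Ac i

/-- The assignment, to each strategy profile `σ`, of the induced (Ionescu–Tulcea)
probability measure `P_σ` on the set of plays; it is uniquely characterized by the
probabilities it assigns to cylinder sets. -/
structure PlayMeasure {ι : Type*} [Fintype ι] (Ac : ι → Type*)
    [∀ i, MeasurableSpace (Ac i)] where
  μ : Profile Ac → Measure (Play Ac)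
  isProb : ∀ σ, IsProbabilityMeasure (μ σ)
  cyl : ∀ (σ : Profile Ac) (n : ℕ) (p : Play Ac),
    μ σ {q | ∀ t, t < n → q t = p t}
      = ∏ t ∈ Finset.range n, ∏ i, ((σ i).act t p) (p t i)

variable {ι : Type*} [Fintype ι] [DecidableEq ι] [Nonempty ι]
  {Ac : ι → Type*} [∀ i, Fintype (Ac i)] [∀ i, Nonempty (Ac i)]
  [∀ i, MeasurableSpace (Ac i)] [∀ i, DiscreteMeasurableSpace (Ac i)]

/-- The expected payoff `E_σ[f]` of a strategy profile `σ` for payoff function `f`. -/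
noncomputable def expPay (PM : PlayMeasure Ac) (σ : Profile Ac) (f : Play Ac → ℝ) : ℝ :=
  ∫ p, f p ∂(PM.μ σ)

/-- Concatenation of the history given by the first `n` coordinates of `h` with the play `q`. -/
def splice (n : ℕ) (h q : Play Ac) : Play Ac := fun t => if t < n then h t else q (t - n)

/-- The continuation of a strategy in the subgame that starts at the history
given by the first `n` coordinates of `h`. -/
def Strategy.shift {i : ι} (σi : Strategy Ac i) (n : ℕ) (h : Play Ac) : Strategy Ac i where
  act t q := σi.act (n + t) (splice n h q)
  depends_on_past := by
    intro t p q hpq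
    refine σi.depends_on_past _ _ _ ?_
    intro s hs
    simp only [splice]
    by_cases hsn : s < n
    · simp [hsn]
    · simp only [if_neg hsn]
      exact hpq (s - n) (by omega)

/-- The expected payoff `E_σ[f ∣ h]` in the subgame that starts at the history
given by the first `n` coordinates of `h`. -/
noncomputable def subExp (PM : PlayMeasure Ac) (σ : Profile Ac) (f : Play Ac → ℝ)
    (n : ℕ) (h : Play Ac) : ℝ :=
  ∫ q, f (splice n h q) ∂(PM.μ (fun i => (σ i).shift n h))

/-- The minmax value of player `i`. -/
noncomputable def minmax (PM : PlayMeasure Ac) (f : Play Ac → ℝ) (i : ι) : ℝ :=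
  ⨅ τ : Profile Ac, ⨆ σi : Strategy Ac i, expPay PM (Function.update τ i σi) f

/-- The maxmin value of player `i`. -/
noncomputable def maxmin (PM : PlayMeasure Ac) (f : Play Ac → ℝ) (i : ι) : ℝ :=
  ⨆ σi : Strategy Ac i, ⨅ τ : Profile Ac, expPay PM (Function.update τ i σi) f

/-- The minmax value of player `i` in the subgame that starts at the history
given by the first `n` coordinates of `h`. -/
noncomputable def subMinmax (PM : PlayMeasure Ac) (f : Play Ac → ℝ) (i : ι)
    (n : ℕ) (h : Play Ac) : ℝ :=
  ⨅ τ : Profile Ac, ⨆ σi : Strategy Ac i, subExp PM (Function.update τ i σi) f n h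

/-- The maxmin value of player `i` in the subgame that starts at the history
given by the first `n` coordinates of `h`. -/
noncomputable def subMaxmin (PM : PlayMeasure Ac) (f : Play Ac → ℝ) (i : ι)
    (n : ℕ) (h : Play Ac) : ℝ :=
  ⨆ σi : Strategy Ac i, ⨅ τ : Profile Ac, subExp PM (Function.update τ i σi) f n h

/-- A strategy profile `σ` is an `ε`-equilibrium if no player can gain more than `ε`
by a unilateral deviation. -/
def IsEpsEquilibrium (PM : PlayMeasure Ac) (f : ι → Play Ac → ℝ) (ε : ℝ)
    (σ : Profile Ac) : Prop :=
  ∀ (i : ι) (σi : Strategy Ac i),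
    expPay PM (Function.update σ i σi) (f i) ≤ expPay PM σ (f i) + ε

/-- A payoff function is tail-measurable if changing finitely many coordinates of the
play does not change its value. -/
def TailMeasurable (f : Play Ac → ℝ) : Prop :=
  ∀ p q : Play Ac, (∃ N, ∀ t, N ≤ t → p t = q t) → f p = f q

/-- A payoff function is bounded. -/
def BddPayoff (f : Play Ac → ℝ) : Prop := ∃ C, ∀ p, |f p| ≤ C

end Blackwell

/-!
Grim trigger. All players follow `p*`; the first player `i` to leave it alone, at time `t`, is
punished from time `t + 1` on by a profile that holds his continuation payoff to at most
`f i p* + ε`. Such punishments exist because, `f i` being tail-measurable, the continuation payoff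
does not depend on the history, and the minmax value of the continuation game is at most `v̄ i`:
otherwise `i` could answer a near-optimal punishment of the whole game by near-best responses in
every subgame. Against the grim trigger, the payoff of a deviation by `i` is then an average of
`f i p*` (the play never leaves `p*`) and punished continuation payoffs, hence at most
`f i p* + ε`; it is computed as the limit of the integrals over the cylinders around `p*`.
-/

namespace Blackwell

open Function

variable {ι : Type*} {Ac : ι → Type*}

instance {i : ι} [∀ i, Nonempty (Ac i)] : Nonempty (Strategy Ac i) :=
  ⟨⟨fun _ _ => PMF.pure (Classical.arbitrary _), fun _ _ _ _ => rfl⟩⟩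

@[ext]
theorem Strategy.ext {i : ι} {σ τ : Strategy Ac i} (h : σ.act = τ.act) : σ = τ := by
  cases σ; cases τ; congr

def Profile.shift (σ : Profile Ac) (n : ℕ) (h : Play Ac) : Profile Ac :=
  fun i => (σ i).shift n h

theorem Profile.shift_update [DecidableEq ι] (σ : Profile Ac) (i : ι) (σi : Strategy Ac i)
    (n : ℕ) (h : Play Ac) :
    Profile.shift (update σ i σi) n h = update (σ.shift n h) i (σi.shift n h) := by
  funext j
  by_cases hj : j = i
  · subst hj; simp [Profile.shift]
  · simp [Profile.shift, hj]

section Splice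

theorem splice_of_lt {n t : ℕ} (ht : t < n) (h q : Play Ac) : splice n h q t = h t :=
  if_pos ht

theorem splice_of_le {n t : ℕ} (ht : n ≤ t) (h q : Play Ac) : splice n h q t = q (t - n) :=
  if_neg (by omega)

@[simp]
theorem splice_add (n s : ℕ) (h q : Play Ac) : splice n h q (n + s) = q s := by
  rw [splice_of_le (by omega), Nat.add_sub_cancel_left]

theorem measurable_splice [∀ i, MeasurableSpace (Ac i)] (n : ℕ) (h : Play Ac) :
    Measurable (splice n h : Play Ac → Play Ac) := by
  refine measurable_pi_lambda _ fun t => ?_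
  by_cases ht : t < n
  · simp only [splice, if_pos ht]; exact measurable_const
  · simp only [splice, if_neg ht]; exact measurable_pi_apply _

theorem TailMeasurable.comp_splice {F : Play Ac → ℝ} (hF : TailMeasurable F) (n : ℕ)
    (h h' : Play Ac) : (fun q => F (splice n h q)) = fun q => F (splice n h' q) :=
  funext fun q => hF _ _ ⟨n, fun t ht => by rw [splice_of_le ht, splice_of_le ht]⟩

end Splice

section Cylinders

def cylSet (n : ℕ) (p : Play Ac) : Set (Play Ac) := {q | ∀ t < n, q t = p t}

@[simp]
theorem cylSet_zero (p : Play Ac) : cylSet 0 p = Set.univ := by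
  ext q; simp [cylSet]

theorem antitone_cylSet (p : Play Ac) : Antitone fun n => cylSet n p :=
  fun _ _ hmn _ hq t ht => hq t (ht.trans_le hmn)

theorem iInter_cylSet (p : Play Ac) : ⋂ n, cylSet n p = {p} :=
  Set.eq_singleton_iff_unique_mem.2
    ⟨Set.mem_iInter.2 fun _ _ _ => rfl,
      fun _ hq => funext fun t => Set.mem_iInter.1 hq (t + 1) t (Nat.lt_succ_self t)⟩

theorem disjoint_cylSet {n t : ℕ} {p p' : Play Ac} (ht : t < n) (hne : p t ≠ p' t) :
    Disjoint (cylSet n p) (cylSet n p') :=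
  Set.disjoint_left.2 fun _ hq hq' => hne ((hq t ht).symm.trans (hq' t ht))

theorem measurableSet_cylSet [Countable ι] [∀ i, MeasurableSpace (Ac i)]
    [∀ i, MeasurableSingletonClass (Ac i)] (n : ℕ) (p : Play Ac) :
    MeasurableSet (cylSet n p) := by
  have : cylSet n p = ⋂ t ∈ Finset.range n, (fun q : Play Ac => q t) ⁻¹' {p t} := by
    ext q; simp [cylSet]
  rw [this]
  exact .biInter (Finset.range n).countable_toSet
    fun t _ => measurable_pi_apply t (.singleton (p t))

theorem splice_mem_cylSet {n m : ℕ} {h q r : Play Ac} :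
    splice n h q ∈ cylSet m r ↔
      (∀ t < min m n, h t = r t) ∧ ∀ s < m - n, q s = r (n + s) := by
  refine ⟨fun hs => ⟨fun t ht => ?_, fun s hs' => ?_⟩, fun ⟨h1, h2⟩ t ht => ?_⟩
  · rw [← hs t (by omega), splice_of_lt (by omega)]
  · rw [← hs (n + s) (by omega), splice_add]
  · by_cases htn : t < n
    · rw [splice_of_lt htn]; exact h1 t (by omega)
    · rw [splice_of_le (by omega), h2 (t - n) (by omega)]
      congr 1; omega

theorem cylSet_inter_cylSet {n m : ℕ} {p r : Play Ac} (hpr : ∀ t < min m n, p t = r t) :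
    cylSet m r ∩ cylSet n p = cylSet (n + (m - n)) (splice n p fun s => r (n + s)) := by
  ext x
  simp only [Set.mem_inter_iff, cylSet, Set.mem_ofPred_eq]
  refine ⟨fun ⟨hr, hp⟩ t ht => ?_, fun hx => ⟨fun t ht => ?_, fun t ht => ?_⟩⟩
  · by_cases htn : t < n
    · rw [splice_of_lt htn, hp t htn]
    · rw [splice_of_le (by omega), hr t (by omega)]; congr 1; omega
  · by_cases htn : t < n
    · rw [hx t (by omega), splice_of_lt htn, hpr t (by omega)]
    · rw [hx t (by omega), splice_of_le (by omega)]; congr 1; omega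
  · rw [hx t (by omega), splice_of_lt ht]

theorem iUnion_cylSet_update (n : ℕ) (p : Play Ac) :
    ⋃ a : ∀ j, Ac j, cylSet (n + 1) (update p n a) = cylSet n p := by
  ext q
  simp only [Set.mem_iUnion, cylSet, Set.mem_ofPred_eq]
  refine ⟨fun ⟨a, ha⟩ t ht => ?_, fun hq => ⟨q n, fun t ht => ?_⟩⟩
  · rw [ha t (by omega), update_of_ne (by omega)]
  · rcases Nat.lt_succ_iff_lt_or_eq.1 ht with ht | rfl
    · rw [update_of_ne (by omega), hq t ht]
    · rw [update_self]

theorem pairwise_disjoint_cylSet_update (n : ℕ) (p : Play Ac) :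
    Pairwise (Disjoint on fun a : ∀ j, Ac j => cylSet (n + 1) (update p n a)) :=
  fun a a' hne => disjoint_cylSet (Nat.lt_succ_self n) (by simpa using hne)

theorem isPiSystem_cylSet : IsPiSystem {s : Set (Play Ac) | ∃ n p, s = cylSet n p} := by
  rintro _ ⟨n, p, rfl⟩ _ ⟨m, r, rfl⟩ ⟨q, hqp, hqr⟩
  wlog hnm : n ≤ m generalizing n m p r
  · rw [Set.inter_comm]; exact this m r n p hqr hqp (by omega)
  refine ⟨m, r, Set.inter_eq_right.2 fun x hx t ht => ?_⟩
  rw [hx t (by omega), ← hqr t (by omega), hqp t ht]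

end Cylinders

section Histories

variable [∀ i, Nonempty (Ac i)]

noncomputable def histPlay {n : ℕ} (h : Fin n → ∀ j, Ac j) : Play Ac :=
  fun t => if ht : t < n then h ⟨t, ht⟩ else Classical.arbitrary _

theorem histPlay_of_lt {n t : ℕ} (ht : t < n) (h : Fin n → ∀ j, Ac j) :
    histPlay h t = h ⟨t, ht⟩ :=
  dif_pos ht

theorem mem_cylSet_histPlay {n : ℕ} {h : Fin n → ∀ j, Ac j} {q : Play Ac} :
    q ∈ cylSet n (histPlay h) ↔ ∀ s : Fin n, q s = h s :=
  ⟨fun hq s => by rw [hq s s.2, histPlay_of_lt s.2],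
    fun hq t ht => by rw [histPlay_of_lt ht, hq ⟨t, ht⟩]⟩

theorem iUnion_cylSet_histPlay (n : ℕ) :
    ⋃ h : Fin n → (∀ j, Ac j), cylSet n (histPlay h) = Set.univ :=
  Set.eq_univ_of_forall fun q =>
    Set.mem_iUnion.2 ⟨fun s => q s, mem_cylSet_histPlay.2 fun _ => rfl⟩

theorem pairwise_disjoint_cylSet_histPlay (n : ℕ) :
    Pairwise (Disjoint on fun h : Fin n → (∀ j, Ac j) => cylSet n (histPlay h)) := by
  intro h h' hne
  obtain ⟨s, hs⟩ := Function.ne_iff.1 hne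
  exact disjoint_cylSet s.2 (by rwa [histPlay_of_lt s.2, histPlay_of_lt s.2])

variable [Finite ι] [∀ i, Finite (Ac i)] [∀ i, MeasurableSpace (Ac i)]
  [∀ i, MeasurableSingletonClass (Ac i)]

theorem generateFrom_cylSet :
    (inferInstance : MeasurableSpace (Play Ac)) =
      MeasurableSpace.generateFrom {s | ∃ n p, s = cylSet n p} := by
  refine le_antisymm (iSup_le fun t => measurable_iff_comap_le.1 fun S _ => ?_)
    (MeasurableSpace.generateFrom_le ?_)
  · have : (fun q : Play Ac => q t) ⁻¹' S = ⋃ (h : Fin (t + 1) → (∀ j, Ac j))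
        (_ : h (Fin.last t) ∈ S), cylSet (t + 1) (histPlay h) := by
      ext q
      simp only [Set.mem_preimage, Set.mem_iUnion, exists_prop, mem_cylSet_histPlay]
      exact ⟨fun hq => ⟨fun s => q s, hq, fun _ => rfl⟩,
        fun ⟨h, hS, hq⟩ => by rwa [← hq (Fin.last t)] at hS⟩
    rw [this]
    exact .iUnion fun h => .iUnion fun _ => .basic _ ⟨t + 1, _, rfl⟩
  · rintro _ ⟨n, p, rfl⟩
    exact measurableSet_cylSet n p

theorem ext_of_cylSet {μ ν : Measure (Play Ac)} [IsFiniteMeasure μ]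
    (h : ∀ n p, μ (cylSet n p) = ν (cylSet n p)) : μ = ν := by
  refine ext_of_generate_finite _ generateFrom_cylSet isPiSystem_cylSet ?_ ?_
  · rintro _ ⟨n, p, rfl⟩; exact h n p
  · simpa using h 0 (histPlay (n := 0) Fin.elim0)

end Histories

section Conditioning

variable [Fintype ι] [∀ i, MeasurableSpace (Ac i)] (PM : PlayMeasure Ac)

instance PlayMeasure.isProbabilityMeasure (σ : Profile Ac) : IsProbabilityMeasure (PM.μ σ) :=
  PM.isProb σ

theorem PlayMeasure.measure_cylSet_splice (σ : Profile Ac) (n k : ℕ) (p q : Play Ac) :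
    PM.μ σ (cylSet (n + k) (splice n p q))
      = PM.μ σ (cylSet n p) * PM.μ (σ.shift n p) (cylSet k q) := by
  simp only [cylSet, PM.cyl, Finset.prod_range_add]
  congr 1
  refine Finset.prod_congr rfl fun t ht => Finset.prod_congr rfl fun i _ => ?_
  have ht : t < n := Finset.mem_range.1 ht
  rw [(σ i).depends_on_past t _ p fun s hs => splice_of_lt (hs.trans ht) _ _, splice_of_lt ht]
  · simp [Profile.shift, Strategy.shift]

theorem PlayMeasure.measure_cylSet_eq_zero (σ : Profile Ac) {n t : ℕ} {p : Play Ac} {j : ι}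
    (ht : t < n) (hzero : (σ j).act t p (p t j) = 0) : PM.μ σ (cylSet n p) = 0 := by
  rw [cylSet, PM.cyl]
  exact Finset.prod_eq_zero (Finset.mem_range.2 ht) (Finset.prod_eq_zero (Finset.mem_univ j) hzero)

theorem subExp_update [DecidableEq ι] (σ : Profile Ac) (i : ι) (σi : Strategy Ac i)
    (F : Play Ac → ℝ) (n : ℕ) (h : Play Ac) :
    subExp PM (update σ i σi) F n h
      = expPay PM (update (σ.shift n h) i (σi.shift n h)) fun q => F (splice n h q) := by
  rw [← Profile.shift_update]; rfl

variable [∀ i, Finite (Ac i)] [∀ i, Nonempty (Ac i)] [∀ i, MeasurableSingletonClass (Ac i)]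

theorem PlayMeasure.restrict_cylSet (σ : Profile Ac) (n : ℕ) (p : Play Ac) :
    (PM.μ σ).restrict (cylSet n p)
      = PM.μ σ (cylSet n p) • (PM.μ (σ.shift n p)).map (splice n p) := by
  refine ext_of_cylSet fun m r => ?_
  rw [Measure.restrict_apply (measurableSet_cylSet m r), Measure.smul_apply,
    Measure.map_apply (measurable_splice n p) (measurableSet_cylSet m r), smul_eq_mul]
  by_cases hpr : ∀ t < min m n, p t = r t
  · have hpre : splice n p ⁻¹' cylSet m r = cylSet (m - n) fun s => r (n + s) := by
      ext q
      exact splice_mem_cylSet.trans (and_iff_right hpr)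
    rw [hpre, cylSet_inter_cylSet hpr, PM.measure_cylSet_splice]
  · obtain ⟨t, ht, hne⟩ : ∃ t < min m n, p t ≠ r t := by
      simpa only [not_forall, exists_prop] using hpr
    have hpre : splice n p ⁻¹' cylSet m r = ∅ :=
      Set.eq_empty_of_forall_notMem fun q hq => hne ((splice_mem_cylSet.1 hq).1 t ht)
    have hinter : cylSet m r ∩ cylSet n p = ∅ :=
      Set.eq_empty_of_forall_notMem fun q ⟨hr, hp⟩ =>
        hne ((hp t (by omega)).symm.trans (hr t (by omega)))
    rw [hpre, hinter, measure_empty, measure_empty, mul_zero]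

theorem PlayMeasure.setIntegral_cylSet (σ : Profile Ac) (n : ℕ) (p : Play Ac)
    {F : Play Ac → ℝ} (hF : Measurable F) :
    ∫ q in cylSet n p, F q ∂PM.μ σ = (PM.μ σ).real (cylSet n p) * subExp PM σ F n p := by
  rw [PM.restrict_cylSet, integral_smul_measure,
    integral_map (measurable_splice n p).aemeasurable hF.aestronglyMeasurable]
  rfl

end Conditioning

section Payoffs

variable {F : Play Ac → ℝ}

theorem BddPayoff.comp (hF : BddPayoff F) (φ : Play Ac → Play Ac) :
    BddPayoff fun q => F (φ q) :=
  let ⟨C, hC⟩ := hF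
  ⟨C, fun q => hC (φ q)⟩

theorem BddPayoff.sub_const (hF : BddPayoff F) (c : ℝ) : BddPayoff fun p => F p - c :=
  let ⟨C, hC⟩ := hF
  ⟨C + |c|, fun p => (abs_sub _ _).trans (by linarith [hC p])⟩

variable [∀ i, MeasurableSpace (Ac i)]

theorem BddPayoff.integrable (hF : BddPayoff F) (hFm : Measurable F) (μ : Measure (Play Ac))
    [IsFiniteMeasure μ] : Integrable F μ :=
  let ⟨C, hC⟩ := hF
  .of_bound hFm.aestronglyMeasurable C (.of_forall hC)

variable [Fintype ι] {PM : PlayMeasure Ac}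

theorem abs_expPay_le {C : ℝ} (hC : ∀ p, |F p| ≤ C) (σ : Profile Ac) :
    |expPay PM σ F| ≤ C := by
  simpa [expPay] using norm_integral_le_of_norm_le_const (μ := PM.μ σ)
    (.of_forall fun p => (Real.norm_eq_abs _).trans_le (hC p))

theorem expPay_sub_const (hF : BddPayoff F) (hFm : Measurable F) (σ : Profile Ac) (c : ℝ) :
    expPay PM σ (fun p => F p - c) = expPay PM σ F - c := by
  rw [expPay, integral_sub (hF.integrable hFm _) (integrable_const c), integral_const,
    probReal_univ, one_smul, expPay]

theorem PlayMeasure.expPay_eq_sum_histPlay [DecidableEq ι] [∀ i, Fintype (Ac i)]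
    [∀ i, Nonempty (Ac i)] [∀ i, MeasurableSingletonClass (Ac i)] (hF : BddPayoff F)
    (hFm : Measurable F) (σ : Profile Ac) (n : ℕ) :
    expPay PM σ F = ∑ h : Fin n → (∀ j, Ac j),
      (PM.μ σ).real (cylSet n (histPlay h)) * subExp PM σ F n (histPlay h) := by
  rw [expPay, ← setIntegral_univ, ← iUnion_cylSet_histPlay n,
    integral_iUnion_fintype (fun _ => measurableSet_cylSet _ _)
      (pairwise_disjoint_cylSet_histPlay n) fun _ => (hF.integrable hFm _).integrableOn]
  exact Finset.sum_congr rfl fun h _ => PM.setIntegral_cylSet σ n _ hFm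

theorem PlayMeasure.sum_measureReal_cylSet_histPlay [DecidableEq ι] [∀ i, Fintype (Ac i)]
    [∀ i, Nonempty (Ac i)] [∀ i, MeasurableSingletonClass (Ac i)] (σ : Profile Ac) (n : ℕ) :
    ∑ h : Fin n → (∀ j, Ac j), (PM.μ σ).real (cylSet n (histPlay h)) = 1 := by
  rw [← measureReal_iUnion_fintype (pairwise_disjoint_cylSet_histPlay n)
    fun _ => measurableSet_cylSet _ _, iUnion_cylSet_histPlay, probReal_univ]

end Payoffs

section Minmax

variable [Fintype ι] [DecidableEq ι] [∀ i, MeasurableSpace (Ac i)] {PM : PlayMeasure Ac}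
  {F : Play Ac → ℝ}

theorem BddPayoff.bddAbove_expPay_update (hF : BddPayoff F) (τ : Profile Ac) (i : ι) :
    BddAbove (Set.range fun σi : Strategy Ac i => expPay PM (update τ i σi) F) :=
  let ⟨C, hC⟩ := hF
  ⟨C, Set.forall_mem_range.2 fun _ => (le_abs_self _).trans (abs_expPay_le hC _)⟩

variable [∀ i, Nonempty (Ac i)]

theorem exists_forall_expPay_lt_of_minmax_lt (hF : BddPayoff F) {i : ι} {c : ℝ}
    (hc : minmax PM F i < c) : ∃ τ : Profile Ac, ∀ σi, expPay PM (update τ i σi) F < c :=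
  let ⟨τ, hτ⟩ := exists_lt_of_ciInf_lt hc
  ⟨τ, fun σi => (le_ciSup (hF.bddAbove_expPay_update τ i) σi).trans_lt hτ⟩

theorem minmax_le_of_forall_expPay_le (hF : BddPayoff F) {i : ι} {τ : Profile Ac} {c : ℝ}
    (h : ∀ σi, expPay PM (update τ i σi) F ≤ c) : minmax PM F i ≤ c := by
  obtain ⟨C, hC⟩ := hF
  have hbdd : BddBelow (Set.range fun τ : Profile Ac =>
      ⨆ σi : Strategy Ac i, expPay PM (update τ i σi) F) := by
    refine ⟨-C, Set.forall_mem_range.2 fun τ => ?_⟩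
    exact (neg_le_of_abs_le (abs_expPay_le hC _)).trans
      (le_ciSup (BddPayoff.bddAbove_expPay_update ⟨C, hC⟩ τ i) (Classical.arbitrary _))
  exact (ciInf_le hbdd τ).trans (ciSup_le h)

end Minmax

def Strategy.graft {i : ι} (s : Strategy Ac i) (n : ℕ)
    (g : (Fin n → ∀ j, Ac j) → Strategy Ac i) : Strategy Ac i where
  act t q := if t < n then s.act t q else (g fun k : Fin n => q k).act (t - n) fun k => q (n + k)
  depends_on_past t p q hpq := by
    by_cases ht : t < n
    · simp only [if_pos ht]; exact s.depends_on_past t p q hpq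
    · have hhist : (fun k : Fin n => p k) = fun k : Fin n => q k :=
        funext fun k => hpq k (k.2.trans_le (not_lt.1 ht))
      simp only [if_neg ht, hhist]
      exact (g _).depends_on_past _ _ _ fun k hk => hpq (n + k) (by omega)

theorem Strategy.graft_shift [∀ i, Nonempty (Ac i)] {i : ι} (s : Strategy Ac i) (n : ℕ)
    (g : (Fin n → ∀ j, Ac j) → Strategy Ac i) (h : Fin n → ∀ j, Ac j) :
    (s.graft n g).shift n (histPlay h) = g h := by
  ext t q : 3
  have hhist : (fun k : Fin n => splice n (histPlay h) q k) = h :=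
    funext fun k => by rw [splice_of_lt k.2, histPlay_of_lt k.2]
  simp [Strategy.shift, graft, hhist]

section Punishment

variable [Fintype ι] [DecidableEq ι] [∀ i, MeasurableSpace (Ac i)]

def IsPunishment (PM : PlayMeasure Ac) (G : Play Ac → ℝ) (i : ι) (Q : ℕ → Profile Ac)
    (c : ℝ) : Prop :=
  ∀ n h σi, expPay PM (update (Q n) i σi) (fun q => G (splice n h q)) ≤ c

theorem IsPunishment.sub_const {PM : PlayMeasure Ac} {G : Play Ac → ℝ} {i : ι}
    {Q : ℕ → Profile Ac} {c : ℝ} (hQ : IsPunishment PM G i Q c) (hG : BddPayoff G)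
    (hGm : Measurable G) : IsPunishment PM (fun p => G p - c) i Q 0 := fun n h σi => by
  rw [expPay_sub_const (hG.comp _) (hGm.comp (measurable_splice n h)), sub_nonpos]
  exact hQ n h σi

variable [∀ i, Fintype (Ac i)] [∀ i, Nonempty (Ac i)] [∀ i, MeasurableSingletonClass (Ac i)]

/-- If every subgame after a history of length `n` gave `i` more than `c` against the shifted
`τ`, grafting these answers would give `i` more than `c` against `τ` itself. -/
theorem minmax_comp_splice_le (PM : PlayMeasure Ac) {F : Play Ac → ℝ} (hF : BddPayoff F)
    (hFm : Measurable F) (hFt : TailMeasurable F) (i : ι) (n : ℕ) (p : Play Ac) :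
    minmax PM (fun q => F (splice n p q)) i ≤ minmax PM F i := by
  refine le_of_forall_gt_imp_ge_of_dense fun c hc => ?_
  obtain ⟨τ, hτ⟩ := exists_forall_expPay_lt_of_minmax_lt hF hc
  by_contra! hlt
  have hdev : ∀ h : Fin n → ∀ j, Ac j, ∃ σi : Strategy Ac i,
      c < expPay PM (update (τ.shift n (histPlay h)) i σi) fun q => F (splice n p q) := by
    intro h
    by_contra! hle
    exact hlt.not_ge (minmax_le_of_forall_expPay_le (hF.comp _) hle)
  choose g hg using hdev
  set σc := (Classical.arbitrary (Strategy Ac i)).graft n g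
  refine (hτ σc).not_ge ?_
  calc c = ∑ h : Fin n → ∀ j, Ac j,
        (PM.μ (update τ i σc)).real (cylSet n (histPlay h)) * c := by
        rw [← Finset.sum_mul, PM.sum_measureReal_cylSet_histPlay, one_mul]
    _ ≤ _ := Finset.sum_le_sum fun h _ => mul_le_mul_of_nonneg_left ?_ measureReal_nonneg
    _ = expPay PM (update τ i σc) F := (PM.expPay_eq_sum_histPlay hF hFm _ n).symm
  rw [subExp_update, Strategy.graft_shift, hFt.comp_splice n _ p]
  exact (hg h).le

theorem exists_isPunishment (PM : PlayMeasure Ac) {F : Play Ac → ℝ} (hF : BddPayoff F)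
    (hFm : Measurable F) (hFt : TailMeasurable F) (i : ι) {c : ℝ} (hc : minmax PM F i < c) :
    ∃ Q : ℕ → Profile Ac, IsPunishment PM F i Q c := by
  let p : Play Ac := Classical.arbitrary _
  choose Q hQ using fun n => exists_forall_expPay_lt_of_minmax_lt (hF.comp (splice n p)) <|
    (minmax_comp_splice_le PM hF hFm hFt i n p).trans_lt hc
  refine ⟨Q, fun n h σi => ?_⟩
  rw [hFt.comp_splice n h p]
  exact (hQ n σi).le

end Punishment

section GrimTrigger

variable {pstar : Play Ac}

variable (pstar) in
noncomputable def firstDev (p : Play Ac) (t : ℕ) : ℕ :=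
  open Classical in if h : ∃ s < t, p s ≠ pstar s then Nat.find h else 0

theorem firstDev_spec {p : Play Ac} {t : ℕ} (h : ∃ s < t, p s ≠ pstar s) :
    firstDev pstar p t < t ∧ p (firstDev pstar p t) ≠ pstar (firstDev pstar p t) ∧
      ∀ s < firstDev pstar p t, p s = pstar s := by
  classical
  rw [firstDev, dif_pos h]
  obtain ⟨hlt, hne⟩ := Nat.find_spec h
  exact ⟨hlt, hne, fun s hs => not_not.1 fun hs' => Nat.find_min h hs ⟨hs.trans hlt, hs'⟩⟩

theorem firstDev_eq {p : Play Ac} {t d : ℕ} (hd : d < t) (hne : p d ≠ pstar d)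
    (hbefore : ∀ s < d, p s = pstar s) : firstDev pstar p t = d := by
  obtain ⟨hlt, hne', hbefore'⟩ := firstDev_spec ⟨d, hd, hne⟩
  by_contra hd'
  rcases Nat.lt_or_gt_of_ne hd' with hd' | hd'
  · exact hne' (hbefore _ hd')
  · exact hne (hbefore' _ hd')

theorem firstDev_congr {p q : Play Ac} {t : ℕ} (hpq : ∀ s < t, p s = q s)
    (h : ∃ s < t, p s ≠ pstar s) : firstDev pstar q t = firstDev pstar p t := by
  obtain ⟨hlt, hne, hbefore⟩ := firstDev_spec h
  exact firstDev_eq hlt (hpq _ hlt ▸ hne) fun s hs => hpq s (hs.trans hlt) ▸ hbefore s hs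

variable [Nonempty ι]

variable (pstar) in
noncomputable def deviator (t : ℕ) (a : ∀ j, Ac j) : ι :=
  Classical.epsilon fun k => a k ≠ pstar t k

theorem deviator_update [DecidableEq ι] {t : ℕ} {i : ι} {b : Ac i} (hb : b ≠ pstar t i) :
    deviator pstar t (update (pstar t) i b) = i := by
  have hdev := Classical.epsilon_spec (p := fun k => update (pstar t) i b k ≠ pstar t k)
    ⟨i, by simpa using hb⟩
  by_contra hne
  exact hdev (update_of_ne hne _ _)

variable (pstar) in
/-- Simultaneous deviations are blamed on an arbitrary one of the deviators: only unilateral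
deviations matter for the equilibrium property. -/
noncomputable def grimTrigger (P : ι → ℕ → Profile Ac) : Profile Ac :=
  open Classical in fun j =>
  { act t p := if h : ∃ s < t, p s ≠ pstar s then
        (P (deviator pstar (firstDev pstar p t) (p (firstDev pstar p t)))
          (firstDev pstar p t + 1) j).act (t - (firstDev pstar p t + 1))
          fun s => p (firstDev pstar p t + 1 + s)
      else PMF.pure (pstar t j)
    depends_on_past t p q hpq := by
      by_cases hp : ∃ s < t, p s ≠ pstar s
      · have hq : ∃ s < t, q s ≠ pstar s :=
          let ⟨s, hs, hne⟩ := hp; ⟨s, hs, hpq s hs ▸ hne⟩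
        have hlt := (firstDev_spec hp).1
        rw [dif_pos hp, dif_pos hq, firstDev_congr hpq hp, hpq _ hlt]
        exact (P _ _ j).depends_on_past _ _ _ fun s hs => hpq _ (by omega)
      · have hq : ¬ ∃ s < t, q s ≠ pstar s :=
          fun ⟨s, hs, hne⟩ => hp ⟨s, hs, (hpq s hs).symm ▸ hne⟩
        rw [dif_neg hp, dif_neg hq] }

variable (P : ι → ℕ → Profile Ac)

theorem grimTrigger_act_of_onPath (j : ι) {t : ℕ} {p : Play Ac} (hp : ∀ s < t, p s = pstar s) :
    (grimTrigger pstar P j).act t p = PMF.pure (pstar t j) := by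
  classical
  exact dif_neg fun ⟨s, hs, hne⟩ => hne (hp s hs)

theorem grimTrigger_shift (j : ι) {d : ℕ} {X : Play Ac} (hbefore : ∀ s < d, X s = pstar s)
    (hne : X d ≠ pstar d) :
    (grimTrigger pstar P j).shift (d + 1) X = P (deviator pstar d (X d)) (d + 1) j := by
  classical
  ext t q : 3
  have hX : ∀ s < d + 1, splice (d + 1) X q s = X s := fun s hs => splice_of_lt hs _ _
  have hdev : ∃ s < d + 1 + t, splice (d + 1) X q s ≠ pstar s :=
    ⟨d, by omega, by rwa [hX d (by omega)]⟩
  have hfirst : firstDev pstar (splice (d + 1) X q) (d + 1 + t) = d :=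
    firstDev_eq (by omega) (by rwa [hX d (by omega)])
      fun s hs => (hX s (by omega)).trans (hbefore s hs)
  refine (dif_pos hdev).trans ?_
  simp only [hfirst, hX d (Nat.lt_succ_self d), splice_add, Nat.add_sub_cancel_left]

theorem PlayMeasure.grimTrigger_eq_dirac [Fintype ι] [∀ i, Finite (Ac i)]
    [∀ i, Nonempty (Ac i)] [∀ i, MeasurableSpace (Ac i)] [∀ i, MeasurableSingletonClass (Ac i)]
    (PM : PlayMeasure Ac) :
    PM.μ (grimTrigger pstar P) = Measure.dirac pstar := by
  refine ext_of_cylSet fun n r => ?_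
  rw [Measure.dirac_apply' _ (measurableSet_cylSet n r)]
  by_cases hr : ∀ t < n, r t = pstar t
  · rw [Set.indicator_of_mem (show pstar ∈ cylSet n r from fun t ht => (hr t ht).symm),
      cylSet, PM.cyl]
    refine Finset.prod_eq_one fun t ht => Finset.prod_eq_one fun j _ => ?_
    have ht : t < n := Finset.mem_range.1 ht
    rw [grimTrigger_act_of_onPath P j fun s hs => hr s (hs.trans ht), hr t ht]
    simp
  · obtain ⟨hd, hne, hbefore⟩ :=
      firstDev_spec (by simpa only [not_forall, exists_prop] using hr)
    obtain ⟨k, hk⟩ := Function.ne_iff.1 hne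
    rw [Set.indicator_of_notMem fun hmem => hne (hmem _ hd).symm]
    refine PM.measure_cylSet_eq_zero _ (j := k) hd ?_
    rw [grimTrigger_act_of_onPath P k hbefore, PMF.pure_apply, if_neg hk]

end GrimTrigger

section Deviation

variable [Fintype ι] [DecidableEq ι] [Nonempty ι] [∀ i, Fintype (Ac i)] [∀ i, Nonempty (Ac i)]
  [∀ i, MeasurableSpace (Ac i)] [∀ i, MeasurableSingletonClass (Ac i)] (PM : PlayMeasure Ac)
  {pstar : Play Ac} {P : ι → ℕ → Profile Ac} {i : ι} (σi : Strategy Ac i) {G : Play Ac → ℝ}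

/-- A player other than `i` leaving `pstar` has probability zero, since on the path everybody
but `i` plays `pstar` purely; a deviation of `i` alone starts the punishment `P i`. -/
theorem setIntegral_cylSet_update_nonpos (hGm : Measurable G)
    (hP : IsPunishment PM G i (P i) 0) {N : ℕ} {a : ∀ j, Ac j} (ha : a ≠ pstar N) :
    ∫ q in cylSet (N + 1) (update pstar N a), G q ∂PM.μ (update (grimTrigger pstar P) i σi)
      ≤ 0 := by
  set X := update pstar N a
  have hbefore : ∀ s < N, X s = pstar s := fun s hs => update_of_ne hs.ne _ _
  have hXN : X N = a := update_self _ _ _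
  by_cases hother : ∃ k ≠ i, a k ≠ pstar N k
  · obtain ⟨k, hki, hk⟩ := hother
    have hzero : PM.μ (update (grimTrigger pstar P) i σi) (cylSet (N + 1) X) = 0 := by
      refine PM.measure_cylSet_eq_zero _ (j := k) (Nat.lt_succ_self N) ?_
      rw [update_of_ne hki, grimTrigger_act_of_onPath P k hbefore, hXN, PMF.pure_apply,
        if_neg hk]
    rw [setIntegral_measure_zero _ hzero]
  · push Not at hother
    have ha' : a = update (pstar N) i (a i) := funext fun k => by
      by_cases hki : k = i
      · subst hki; rw [update_self]
      · rw [update_of_ne hki, hother k hki]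
    have hai : a i ≠ pstar N i := fun hai => ha (by rw [ha', hai, update_eq_self])
    have hshift : (grimTrigger pstar P).shift (N + 1) X = P i (N + 1) := funext fun j => by
      rw [Profile.shift, grimTrigger_shift P j hbefore (hXN ▸ ha), hXN, ha', deviator_update hai]
    rw [PM.setIntegral_cylSet _ _ _ hGm, subExp_update, hshift]
    exact mul_nonpos_of_nonneg_of_nonpos measureReal_nonneg (hP _ _ _)

theorem setIntegral_cylSet_le_succ (hG : BddPayoff G) (hGm : Measurable G)
    (hP : IsPunishment PM G i (P i) 0) (N : ℕ) :
    ∫ q in cylSet N pstar, G q ∂PM.μ (update (grimTrigger pstar P) i σi)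
      ≤ ∫ q in cylSet (N + 1) pstar, G q ∂PM.μ (update (grimTrigger pstar P) i σi) := by
  classical
  rw [← iUnion_cylSet_update N pstar, integral_iUnion_fintype
      (fun _ => measurableSet_cylSet _ _) (pairwise_disjoint_cylSet_update N pstar)
      fun _ => (hG.integrable hGm _).integrableOn,
    Fintype.sum_eq_add_sum_compl (pstar N), update_eq_self]
  exact add_le_of_nonpos_right <| Finset.sum_nonpos fun a ha =>
    setIntegral_cylSet_update_nonpos PM σi hGm hP (by simpa using ha)

/-- The integrals of `G - c` over the cylinders around `pstar` increase with the length of the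
cylinder and converge to the integral over `{pstar}`, which is nonpositive. -/
theorem expPay_update_grimTrigger_le (hG : BddPayoff G) (hGm : Measurable G) {c : ℝ}
    (hP : IsPunishment PM G i (P i) c) (hc : G pstar ≤ c) :
    expPay PM (update (grimTrigger pstar P) i σi) G ≤ c := by
  set μ := PM.μ (update (grimTrigger pstar P) i σi)
  have hmono : Monotone fun n => ∫ q in cylSet n pstar, G q - c ∂μ :=
    monotone_nat_of_le_succ <| setIntegral_cylSet_le_succ PM σi (hG.sub_const c)
      (hGm.sub_const c) (hP.sub_const hG hGm)
  have hlim := tendsto_setIntegral_of_antitone (μ := μ) (measurableSet_cylSet · pstar)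
    (antitone_cylSet pstar) ⟨0, ((hG.sub_const c).integrable (hGm.sub_const c) μ).integrableOn⟩
  rw [iInter_cylSet] at hlim
  have hpstar : ∫ q in {pstar}, G q - c ∂μ ≤ 0 :=
    setIntegral_nonpos (measurableSet_singleton pstar) fun q hq => by
      rw [Set.mem_singleton_iff.1 hq]; linarith
  have h0 := (hmono.ge_of_tendsto hlim 0).trans hpstar
  rw [cylSet_zero, setIntegral_univ, ← expPay, expPay_sub_const hG hGm] at h0
  linarith

end Deviation

end Blackwell

namespace Blackwell

variable {ι : Type*} [Fintype ι] [DecidableEq ι] [Nonempty ι]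
  {Ac : ι → Type*} [∀ i, Fintype (Ac i)] [∀ i, Nonempty (Ac i)]
  [∀ i, MeasurableSpace (Ac i)] [∀ i, DiscreteMeasurableSpace (Ac i)]

/-- If there is a play `p*` with `f i p* > v̄_i - ε` for every player `i`,
then the game admits an `ε`-equilibrium. -/
theorem exists_eps_equilibrium_of_good_play (PM : PlayMeasure Ac) (f : ι → Play Ac → ℝ)
    (hbdd : ∀ j, BddPayoff (f j)) (hmeas : ∀ j, Measurable (f j))
    (htail : ∀ j, TailMeasurable (f j))
    (ε : ℝ) (hε : 0 < ε)
    (pstar : Play Ac) (hp : ∀ i, minmax PM (f i) i - ε < f i pstar) :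
    ∃ σ : Profile Ac, IsEpsEquilibrium PM f ε σ := by
  choose P hP using fun i => exists_isPunishment PM (hbdd i) (hmeas i) (htail i) i
    (c := f i pstar + ε) (by linarith [hp i])
  refine ⟨grimTrigger pstar P, fun i σi => ?_⟩
  have hpath : expPay PM (grimTrigger pstar P) (f i) = f i pstar := by
    rw [expPay, PM.grimTrigger_eq_dirac, integral_dirac]
  rw [hpath]
  exact expPay_update_grimTrigger_le PM σi (hbdd i) (hmeas i) (hP i) (by linarith)

end Blackwell
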